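/- arXiv:1304.0242 — 2 statements merged into one kernel-verified Lean document; each statement's English description precedes it below -/
import Mathlib

section
/- Let n < r ≤ 2n and let F ∈ 𝓟^r(M_n) (i.e., F is an r-subset of V(M_n) containing an independent set of size n). Then the number of good cyclic orderings c of V(M_n) such that F = {c(0), c(1), …, c(r−1)} equals (2n−r)! · (r−n)! · 2^{r−n}. -/
/-- The partner of a vertex `v` in the perfect matching `Mₙ` on `{1,…,2n}`:
vertices `i` and `i+n` (for `1 ≤ i ≤ n`) are joined by an edge. -/
def partnerMn (n v : ℕ) : ℕ := if v ≤ n then v + n else v - n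

/-- `A` is an independent set of vertices of the perfect matching graph `Mₙ`. -/
def IsIndepMn (n : ℕ) (A : Finset ℕ) : Prop :=
  A ⊆ Finset.Icc 1 (2 * n) ∧ ∀ i ∈ Finset.Icc 1 n, ¬(i ∈ A ∧ i + n ∈ A)

/-- The independence number `α(Mₙ)` of the perfect matching graph `Mₙ`. -/
noncomputable def indepNumMn (n : ℕ) : ℕ := sSup {k : ℕ | ∃ A : Finset ℕ, IsIndepMn n A ∧ A.card = k}

/-- `𝓘ʳ(Mₙ)`: the family of all independent `r`-subsets of `V(Mₙ)`. -/
def famI (n r : ℕ) : Set (Finset ℕ) := {A | A.card = r ∧ IsIndepMn n A}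

/-- `𝓜ʳ(Mₙ)`: the family of all `r`-subsets of `V(Mₙ)` containing an
independent set of maximum size `α(Mₙ)`. -/
def famM (n r : ℕ) : Set (Finset ℕ) :=
  {A | A ⊆ Finset.Icc 1 (2 * n) ∧ A.card = r ∧
    ∃ B ⊆ A, IsIndepMn n B ∧ B.card = indepNumMn n}

/-- `𝓟ʳ(Mₙ) = 𝓘ʳ(Mₙ) ∪ 𝓜ʳ(Mₙ)`. -/
def famP (n r : ℕ) : Set (Finset ℕ) := famI n r ∪ famM n r

/-- A family is `k`-wise intersecting: any `k` (not necessarily distinct) members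
have a common element. -/
def KWiseIntersecting (k : ℕ) (𝓕 : Finset (Finset ℕ)) : Prop :=
  ∀ f : Fin k → Finset ℕ, (∀ i, f i ∈ 𝓕) → ∃ v, ∀ i, v ∈ f i

/-- A good cyclic ordering of `V(Mₙ)`: a bijection `c : ℤ/2nℤ → {1,…,2n}` such that
`c(i+n)` is always the partner of `c(i)`. -/
def IsGoodCyclic (n : ℕ) (c : ZMod (2 * n) → ℕ) : Prop :=
  Function.Injective c ∧ (∀ i, c i ∈ Finset.Icc 1 (2 * n)) ∧
    ∀ i, c (i + (n : ZMod (2 * n))) = partnerMn n (c i)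

/-- The `c`-interval of length `r` beginning at index `x`: `{c(x), c(x+1), …, c(x+r−1)}`. -/
def gInterval (n : ℕ) (c : ZMod (2 * n) → ℕ) (r : ℕ) (x : ZMod (2 * n)) : Finset ℕ :=
  (Finset.range r).image fun j : ℕ => c (x + (j : ZMod (2 * n)))

/-- `c` is saturated with respect to `𝓕`: exactly `r` members of `𝓕` are
`c`-intervals of length `r`. -/
def Saturated (n r : ℕ) (𝓕 : Finset (Finset ℕ)) (c : ZMod (2 * n) → ℕ) : Prop :=
  {A : Finset ℕ | A ∈ 𝓕 ∧ ∃ x, A = gInterval n c r x}.ncard = r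

/-- `c` is `x`-saturated with respect to `𝓕`: it is saturated and every member of `𝓕`
that is a `c`-interval contains the index `x` (equivalently, the element `c(x)`). -/
def XSaturated (n r : ℕ) (𝓕 : Finset (Finset ℕ)) (c : ZMod (2 * n) → ℕ)
    (x : ZMod (2 * n)) : Prop :=
  Saturated n r 𝓕 c ∧ ∀ A ∈ 𝓕, (∃ y, A = gInterval n c r y) → c x ∈ A

def psm (n v : ℕ) : ℕ := if v ≤ n then v else v - n

section Aux
variable {n : ℕ}

lemma partner_mem (hn : 1 ≤ n) {v : ℕ} (hv : 1 ≤ v) (hv2 : v ≤ 2 * n) :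
    1 ≤ partnerMn n v ∧ partnerMn n v ≤ 2 * n := by
  unfold partnerMn; split <;> omega

lemma partner_partner (hn : 1 ≤ n) {v : ℕ} (hv : 1 ≤ v) (hv2 : v ≤ 2 * n) :
    partnerMn n (partnerMn n v) = v := by
  unfold partnerMn; split <;> split <;> omega

lemma partner_ne (hn : 1 ≤ n) {v : ℕ} (hv : 1 ≤ v) : partnerMn n v ≠ v := by
  unfold partnerMn; split <;> omega

lemma psm_mem {v : ℕ} (hv : 1 ≤ v) (hv2 : v ≤ 2 * n) :
    1 ≤ psm n v ∧ psm n v ≤ n := by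
  unfold psm; split <;> omega

lemma psm_partner (hn : 1 ≤ n) {v : ℕ} (hv : 1 ≤ v) (hv2 : v ≤ 2 * n) :
    psm n (partnerMn n v) = psm n v := by
  unfold psm partnerMn; split <;> split <;> omega

lemma psm_eq_cases {v : ℕ} (hv : 1 ≤ v) (hv2 : v ≤ 2 * n) :
    (v ≤ n ∧ psm n v = v ∧ partnerMn n v = psm n v + n) ∨
      (n < v ∧ v = psm n v + n ∧ partnerMn n v = psm n v) := by
  unfold psm partnerMn; split <;> [left; right] <;> simp_all <;> omega

lemma psm_inj {u v : ℕ} (hu : 1 ≤ u) (hu2 : u ≤ 2 * n) (hv : 1 ≤ v) (hv2 : v ≤ 2 * n)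
    (h : psm n u = psm n v) : u = v ∨ u = partnerMn n v := by
  unfold psm partnerMn at *; split_ifs at * <;> omega

lemma add_n_val (hn : 1 ≤ n) (z : ZMod (2 * n)) [NeZero (2 * n)] :
    (z + (n : ZMod (2 * n))).val = if z.val < n then z.val + n else z.val - n := by
  have hz := ZMod.val_lt z
  rw [ZMod.val_add, ZMod.val_natCast]
  have hn2 : n % (2 * n) = n := Nat.mod_eq_of_lt (by omega)
  rw [hn2]
  split_ifs with h
  · exact Nat.mod_eq_of_lt (by omega)
  · rw [Nat.mod_eq_sub_mod (by omega), Nat.mod_eq_of_lt (by omega)]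
    omega

end Aux

def buildW (n k s : ℕ) (F : Finset ℕ) (σ : Fin k → ℕ) (τ : Fin s → ℕ)
    (ε : Fin k → Bool) (j : ℕ) : ℕ :=
  if h : j < k then (if ε ⟨j, h⟩ then σ ⟨j, h⟩ else σ ⟨j, h⟩ + n)
  else if h2 : j - k < s then
    (if τ ⟨j - k, h2⟩ ∈ F then τ ⟨j - k, h2⟩ else τ ⟨j - k, h2⟩ + n)
  else 0

def buildC (n k s : ℕ) (F : Finset ℕ) (σ : Fin k → ℕ) (τ : Fin s → ℕ)
    (ε : Fin k → Bool) (z : ZMod (2 * n)) : ℕ :=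
  if z.val < n then buildW n k s F σ τ ε z.val
  else partnerMn n (buildW n k s F σ τ ε (z.val - n))

section Build
variable {n k s : ℕ} {F : Finset ℕ} {σ : Fin k → ℕ} {τ : Fin s → ℕ} {ε : Fin k → Bool}

lemma buildW_lt {j : ℕ} (h : j < k) :
    buildW n k s F σ τ ε j = if ε ⟨j, h⟩ then σ ⟨j, h⟩ else σ ⟨j, h⟩ + n := by
  unfold buildW; rw [dif_pos h]

lemma buildW_ge {j : ℕ} (h : ¬ j < k) (h2 : j - k < s) :
    buildW n k s F σ τ ε j
      = if τ ⟨j - k, h2⟩ ∈ F then τ ⟨j - k, h2⟩ else τ ⟨j - k, h2⟩ + n := by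
  unfold buildW; rw [dif_neg h, dif_pos h2]

variable (hσ : ∀ i, 1 ≤ σ i ∧ σ i ≤ n ∧ σ i ∈ F ∧ σ i + n ∈ F)
variable (hτ : ∀ i, 1 ≤ τ i ∧ τ i ≤ n ∧ (τ i ∈ F ∨ τ i + n ∈ F) ∧ ¬(τ i ∈ F ∧ τ i + n ∈ F))

include hσ hτ in
lemma buildW_bounds (hks : k + s = n) {j : ℕ} (hj : j < n) :
    1 ≤ buildW n k s F σ τ ε j ∧ buildW n k s F σ τ ε j ≤ 2 * n := by
  by_cases h : j < k
  · rw [buildW_lt h]; have := hσ ⟨j, h⟩; split <;> omega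
  · have h2 : j - k < s := by omega
    rw [buildW_ge h h2]; have := hτ ⟨j - k, h2⟩; split <;> omega

include hσ in
lemma buildW_psm_lt {j : ℕ} (h : j < k) :
    psm n (buildW n k s F σ τ ε j) = σ ⟨j, h⟩ := by
  rw [buildW_lt h]; have := hσ ⟨j, h⟩; unfold psm; split_ifs <;> omega

include hτ in
lemma buildW_psm_ge {j : ℕ} (h : ¬ j < k) (h2 : j - k < s) :
    psm n (buildW n k s F σ τ ε j) = τ ⟨j - k, h2⟩ := by
  rw [buildW_ge h h2]; have := hτ ⟨j - k, h2⟩; unfold psm; split_ifs <;> omega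

include hσ hτ in
lemma buildW_psm_inj (hks : k + s = n)
    (hσi : Function.Injective σ) (hτi : Function.Injective τ)
    {j j' : ℕ} (hj : j < n) (hj' : j' < n)
    (h : psm n (buildW n k s F σ τ ε j) = psm n (buildW n k s F σ τ ε j')) : j = j' := by
  by_cases h1 : j < k <;> by_cases h2 : j' < k
  · rw [buildW_psm_lt hσ h1, buildW_psm_lt hσ h2] at h
    exact congrArg Fin.val (hσi h)
  · exfalso
    rw [buildW_psm_lt hσ h1, buildW_psm_ge hτ h2 (by omega)] at h
    have hA := hσ ⟨j, h1⟩
    have hB := hτ ⟨j' - k, by omega⟩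
    rw [h] at hA
    exact hB.2.2.2 ⟨hA.2.2.1, hA.2.2.2⟩
  · exfalso
    rw [buildW_psm_ge hτ h1 (by omega), buildW_psm_lt hσ h2] at h
    have hA := hσ ⟨j', h2⟩
    have hB := hτ ⟨j - k, by omega⟩
    rw [← h] at hA
    exact hB.2.2.2 ⟨hA.2.2.1, hA.2.2.2⟩
  · rw [buildW_psm_ge hτ h1 (by omega), buildW_psm_ge hτ h2 (by omega)] at h
    have := congrArg Fin.val (hτi h)
    simp only at this
    omega

end Build

section Indep
variable {n : ℕ}

lemma indep_psm_injOn {A : Finset ℕ} (h : IsIndepMn n A) : Set.InjOn (psm n) A := by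
  intro a ha b hb hab
  have ha' := Finset.mem_Icc.mp (h.1 ha)
  have hb' := Finset.mem_Icc.mp (h.1 hb)
  rcases psm_inj ha'.1 ha'.2 hb'.1 hb'.2 hab with h1 | h1
  · exact h1
  · exfalso
    unfold partnerMn at h1
    split_ifs at h1 with hbn
    · exact h.2 b (Finset.mem_Icc.mpr ⟨hb'.1, hbn⟩) ⟨hb, h1 ▸ ha⟩
    · have hba : b = a + n := by omega
      exact h.2 a (Finset.mem_Icc.mpr ⟨ha'.1, by omega⟩) ⟨ha, hba ▸ hb⟩

lemma indep_card_le {A : Finset ℕ} (h : IsIndepMn n A) : A.card ≤ n := by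
  classical
  calc A.card = (A.image (psm n)).card := (Finset.card_image_of_injOn (indep_psm_injOn h)).symm
    _ ≤ (Finset.Icc 1 n).card := by
        apply Finset.card_le_card
        intro x hx
        obtain ⟨a, ha, rfl⟩ := Finset.mem_image.mp hx
        have := Finset.mem_Icc.mp (h.1 ha)
        exact Finset.mem_Icc.mpr (psm_mem this.1 this.2)
    _ = n := by simp

lemma indepNum_eq (hn : 1 ≤ n) : indepNumMn n = n := by
  have hbdd : ∀ k ∈ {k : ℕ | ∃ A : Finset ℕ, IsIndepMn n A ∧ A.card = k}, k ≤ n := by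
    rintro k ⟨A, hA, rfl⟩; exact indep_card_le hA
  have hmem : n ∈ {k : ℕ | ∃ A : Finset ℕ, IsIndepMn n A ∧ A.card = k} := by
    refine ⟨Finset.Icc 1 n, ⟨Finset.Icc_subset_Icc le_rfl (by omega), ?_⟩, by simp⟩
    rintro i hi ⟨h1, h2⟩
    have := Finset.mem_Icc.mp h2
    have := Finset.mem_Icc.mp hi
    omega
  exact le_antisymm (csSup_le ⟨n, hmem⟩ hbdd) (le_csSup ⟨n, hbdd⟩ hmem)

end Indep
section Build2
variable {n k s : ℕ} {F : Finset ℕ} {σ : Fin k → ℕ} {τ : Fin s → ℕ} {ε : Fin k → Bool}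
variable (hσ : ∀ i, 1 ≤ σ i ∧ σ i ≤ n ∧ σ i ∈ F ∧ σ i + n ∈ F)
variable (hτ : ∀ i, 1 ≤ τ i ∧ τ i ≤ n ∧ (τ i ∈ F ∨ τ i + n ∈ F) ∧ ¬(τ i ∈ F ∧ τ i + n ∈ F))

lemma buildC_natCast [NeZero (2 * n)] {j : ℕ} (hj : j < 2 * n) :
    buildC n k s F σ τ ε ((j : ℕ) : ZMod (2 * n))
      = if j < n then buildW n k s F σ τ ε j
        else partnerMn n (buildW n k s F σ τ ε (j - n)) := by
  unfold buildC
  rw [ZMod.val_natCast, Nat.mod_eq_of_lt hj]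

include hσ hτ in
lemma buildC_good [NeZero (2 * n)] (hn : 1 ≤ n) (hks : k + s = n)
    (hσi : Function.Injective σ) (hτi : Function.Injective τ) :
    IsGoodCyclic n (buildC n k s F σ τ ε) := by
  refine ⟨?_, ?_, ?_⟩
  · intro z z' hzz
    have hz := ZMod.val_lt z; have hz' := ZMod.val_lt z'
    unfold buildC at hzz
    apply ZMod.val_injective
    by_cases h1 : z.val < n <;> by_cases h2 : z'.val < n
    · rw [if_pos h1, if_pos h2] at hzz
      exact buildW_psm_inj hσ hτ hks hσi hτi h1 h2 (congrArg (psm n) hzz)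
    · exfalso
      rw [if_pos h1, if_neg h2] at hzz
      have hb := buildW_bounds (ε := ε) hσ hτ hks (show z'.val - n < n by omega)
      have hps : psm n (buildW n k s F σ τ ε z.val)
          = psm n (buildW n k s F σ τ ε (z'.val - n)) := by
        rw [hzz, psm_partner hn hb.1 hb.2]
      have heq := buildW_psm_inj hσ hτ hks hσi hτi h1 (by omega) hps
      rw [heq] at hzz
      exact partner_ne hn hb.1 hzz.symm
    · exfalso
      rw [if_neg h1, if_pos h2] at hzz
      have hb := buildW_bounds (ε := ε) hσ hτ hks (show z.val - n < n by omega)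
      have hps : psm n (buildW n k s F σ τ ε (z.val - n))
          = psm n (buildW n k s F σ τ ε z'.val) := by
        rw [← hzz, psm_partner hn hb.1 hb.2]
      have heq := buildW_psm_inj hσ hτ hks hσi hτi (by omega) h2 hps
      rw [← heq] at hzz
      exact partner_ne hn hb.1 hzz
    · rw [if_neg h1, if_neg h2] at hzz
      have hba := buildW_bounds (ε := ε) hσ hτ hks (show z.val - n < n by omega)
      have hbb := buildW_bounds (ε := ε) hσ hτ hks (show z'.val - n < n by omega)
      have hww : buildW n k s F σ τ ε (z.val - n) = buildW n k s F σ τ ε (z'.val - n) := by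
        rw [← partner_partner hn hba.1 hba.2, hzz, partner_partner hn hbb.1 hbb.2]
      have := buildW_psm_inj hσ hτ hks hσi hτi (show z.val - n < n by omega)
        (show z'.val - n < n by omega) (congrArg (psm n) hww)
      omega
  · intro z
    have hz := ZMod.val_lt z
    unfold buildC
    rw [Finset.mem_Icc]
    split_ifs with h1
    · exact buildW_bounds hσ hτ hks h1
    · have hb := buildW_bounds (ε := ε) hσ hτ hks (show z.val - n < n by omega)
      exact partner_mem hn hb.1 hb.2
  · intro z
    have hz := ZMod.val_lt z
    have hv := add_n_val hn z
    rcases lt_or_ge z.val n with h1 | h1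
    · have hv1 : (z + (n : ZMod (2 * n))).val = z.val + n := by rw [hv, if_pos h1]
      unfold buildC
      rw [hv1, if_neg (by omega), if_pos h1]
      have he : z.val + n - n = z.val := by omega
      rw [he]
    · have hv1 : (z + (n : ZMod (2 * n))).val = z.val - n := by rw [hv, if_neg (by omega)]
      have h2 : z.val - n < n := by omega
      unfold buildC
      rw [hv1, if_pos h2, if_neg (by omega)]
      have hb := buildW_bounds (ε := ε) hσ hτ hks h2
      rw [partner_partner hn hb.1 hb.2]

include hσ hτ in
lemma buildC_image [NeZero (2 * n)] (hn : 1 ≤ n) (hks : k + s = n)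
    (hFsub : ∀ v ∈ F, 1 ≤ v ∧ v ≤ 2 * n)
    (hcover : ∀ v ∈ F, (∃ i, σ i = psm n v) ∨ (∃ i, τ i = psm n v)) :
    F = (Finset.range (n + k)).image fun j : ℕ => buildC n k s F σ τ ε ((j : ℕ) : ZMod (2 * n)) := by
  ext v
  simp only [Finset.mem_image, Finset.mem_range]
  constructor
  · intro hv
    obtain ⟨hv1, hv2⟩ := hFsub v hv
    rcases hcover v hv with ⟨i, hi⟩ | ⟨i, hi⟩
    · have hσi := hσ i
      have hik : (i : ℕ) < k := i.isLt
      rcases psm_eq_cases hv1 hv2 with ⟨hvn, hpv, hpart⟩ | ⟨hvn, hpv, hpart⟩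
      · by_cases hε : ε i
        · refine ⟨(i : ℕ), by omega, ?_⟩
          rw [buildC_natCast (by omega), if_pos (by omega), buildW_lt hik]
          simp only [Fin.eta, hε, if_true]
          omega
        · refine ⟨n + (i : ℕ), by omega, ?_⟩
          rw [buildC_natCast (by omega), if_neg (by omega)]
          have he : n + (i : ℕ) - n = (i : ℕ) := by omega
          rw [he, buildW_lt hik]
          simp only [Fin.eta, hε, if_false, Bool.false_eq_true]
          unfold partnerMn
          split_ifs <;> omega
      · by_cases hε : ε i
        · refine ⟨n + (i : ℕ), by omega, ?_⟩
          rw [buildC_natCast (by omega), if_neg (by omega)]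
          have he : n + (i : ℕ) - n = (i : ℕ) := by omega
          rw [he, buildW_lt hik]
          simp only [Fin.eta, hε, if_true]
          unfold partnerMn
          split_ifs <;> omega
        · refine ⟨(i : ℕ), by omega, ?_⟩
          rw [buildC_natCast (by omega), if_pos (by omega), buildW_lt hik]
          simp only [Fin.eta, hε, if_false, Bool.false_eq_true]
          omega
    · have hτi := hτ i
      have his : (i : ℕ) < s := i.isLt
      refine ⟨k + (i : ℕ), by omega, ?_⟩
      rw [buildC_natCast (by omega), if_pos (by omega), buildW_ge (by omega) (by omega)]
      have he : k + (i : ℕ) - k = (i : ℕ) := by omega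
      simp only [he, Fin.eta]
      rcases psm_eq_cases hv1 hv2 with ⟨hvn, hpv, _⟩ | ⟨hvn, hpv, _⟩
      · rw [if_pos (by rw [hi, hpv]; exact hv)]
        omega
      · rw [if_neg ?_]
        · omega
        · intro hmem
          exact hτi.2.2.2 ⟨hmem, by rw [hi, ← hpv]; exact hv⟩
  · rintro ⟨j, hj, rfl⟩
    rw [buildC_natCast (by omega)]
    split_ifs with h1
    · by_cases h2 : j < k
      · rw [buildW_lt h2]
        have := hσ ⟨j, h2⟩
        split_ifs
        · exact this.2.2.1
        · exact this.2.2.2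
      · rw [buildW_ge h2 (by omega)]
        have := hτ ⟨j - k, by omega⟩
        split_ifs with h3
        · exact h3
        · rcases this.2.2.1 with h4 | h4
          · exact absurd h4 h3
          · exact h4
    · have h2 : j - n < k := by omega
      rw [buildW_lt h2]
      have hh := hσ ⟨j - n, h2⟩
      split_ifs with h3
      · unfold partnerMn
        rw [if_pos hh.2.1]
        exact hh.2.2.2
      · unfold partnerMn
        rw [if_neg (by omega)]
        have he : σ ⟨j - n, h2⟩ + n - n = σ ⟨j - n, h2⟩ := by omega
        rw [he]
        exact hh.2.2.1

end Build2
section Build3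
variable {n k s : ℕ} {F : Finset ℕ} {σ : Fin k → ℕ} {τ : Fin s → ℕ} {ε : Fin k → Bool}

/-- Reconstruction: if `σ τ ε` are extracted from a good cyclic ordering `c` whose
initial `(n+k)`-interval is `F`, then `buildC` rebuilds `c`. -/
lemma buildC_eq [NeZero (2 * n)] (hn : 1 ≤ n) (hks : k + s = n)
    {c : ZMod (2 * n) → ℕ}
    (hcmem : ∀ z, c z ∈ Finset.Icc 1 (2 * n))
    (hcshift : ∀ z, c (z + (n : ZMod (2 * n))) = partnerMn n (c z))
    (hcF : ∀ z : ZMod (2 * n), c z ∈ F ↔ z.val < n + k)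
    (hσ : ∀ i : Fin k, σ i = psm n (c (((i : ℕ) : ZMod (2 * n)))))
    (hτ : ∀ i : Fin s, τ i = psm n (c (((k + (i : ℕ) : ℕ)) : ZMod (2 * n))))
    (hε : ∀ i : Fin k, ε i = decide (c (((i : ℕ) : ZMod (2 * n))) ≤ n)) :
    buildC n k s F σ τ ε = c := by
  have hcast : ∀ j : ℕ, j < 2 * n → ((j : ℕ) : ZMod (2 * n)).val = j := fun j hj => by
    rw [ZMod.val_natCast]; exact Nat.mod_eq_of_lt hj
  have hw : ∀ j, j < n → buildW n k s F σ τ ε j = c ((j : ℕ) : ZMod (2 * n)) := by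
    intro j hj
    have hb := Finset.mem_Icc.mp (hcmem ((j : ℕ) : ZMod (2 * n)))
    by_cases h1 : j < k
    · rw [buildW_lt h1, hε, hσ]
      simp only [Fin.val_mk]
      have hb1 := hb.1; have hb2 := hb.2
      by_cases hvn : c ((j : ℕ) : ZMod (2 * n)) ≤ n
      · rw [if_pos (decide_eq_true hvn)]
        unfold psm; rw [if_pos hvn]
      · rw [if_neg (by simpa using hvn)]
        unfold psm; rw [if_neg hvn]; omega
    · have h2 : j - k < s := by omega
      rw [buildW_ge h1 h2, hτ]
      have he : (k + ((⟨j - k, h2⟩ : Fin s) : ℕ)) = j := by simp; omega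
      rw [he]
      have hpartner : c (((j : ℕ) : ZMod (2 * n)) + (n : ZMod (2 * n))) ∉ F := by
        rw [hcF]
        rw [add_n_val hn, hcast j (by omega), if_pos hj]
        omega
      rw [hcshift] at hpartner
      by_cases hvn : c ((j : ℕ) : ZMod (2 * n)) ≤ n
      · rw [if_pos ?_]
        · unfold psm; rw [if_pos hvn]
        · unfold psm; rw [if_pos hvn]; exact (hcF _).mpr (by rw [hcast j (by omega)]; omega)
      · unfold partnerMn at hpartner
        rw [if_neg hvn] at hpartner
        rw [if_neg ?_]
        · unfold psm; rw [if_neg hvn]; omega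
        · unfold psm; rw [if_neg hvn]; exact hpartner
  funext z
  have hz := ZMod.val_lt z
  unfold buildC
  split_ifs with h1
  · rw [hw z.val h1, ZMod.natCast_zmod_val]
  · have h2 : z.val - n < n := by omega
    rw [hw _ h2]
    have key : ((z.val - n : ℕ) : ZMod (2 * n)) + (n : ZMod (2 * n)) = z := by
      rw [← Nat.cast_add, Nat.sub_add_cancel (by omega), ZMod.natCast_zmod_val]
    calc partnerMn n (c ((z.val - n : ℕ) : ZMod (2 * n)))
        = c (((z.val - n : ℕ) : ZMod (2 * n)) + (n : ZMod (2 * n))) := (hcshift _).symm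
      _ = c z := by rw [key]

/-- Injectivity: the data `σ τ ε` can be recovered from `buildC`. -/
lemma build_inj [NeZero (2 * n)] (hn : 1 ≤ n) (hks : k + s = n)
    {σ' : Fin k → ℕ} {τ' : Fin s → ℕ} {ε' : Fin k → Bool}
    (hσ : ∀ i, 1 ≤ σ i ∧ σ i ≤ n) (hσ' : ∀ i, 1 ≤ σ' i ∧ σ' i ≤ n)
    (hτ : ∀ i, 1 ≤ τ i ∧ τ i ≤ n) (hτ' : ∀ i, 1 ≤ τ' i ∧ τ' i ≤ n)
    (h : buildC n k s F σ τ ε = buildC n k s F σ' τ' ε') :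
    (∀ i, σ i = σ' i) ∧ (∀ i, τ i = τ' i) ∧ (∀ i, ε i = ε' i) := by
  have hcast : ∀ j : ℕ, j < 2 * n → ((j : ℕ) : ZMod (2 * n)).val = j := fun j hj => by
    rw [ZMod.val_natCast]; exact Nat.mod_eq_of_lt hj
  have hσε : ∀ i : Fin k, σ i = σ' i ∧ ε i = ε' i := by
    intro i
    have hx := congrFun h (((i : ℕ) : ZMod (2 * n)))
    have hik : (i : ℕ) < k := i.isLt
    unfold buildC at hx
    rw [hcast (i : ℕ) (by omega), if_pos (show (i:ℕ) < n by omega), if_pos (show (i:ℕ) < n by omega), buildW_lt hik, buildW_lt hik] at hx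
    simp only [Fin.eta] at hx
    have h1 := hσ i; have h2 := hσ' i
    cases hε1 : ε i <;> cases hε2 : ε' i <;> rw [hε1, hε2] at hx <;> simp at hx
    all_goals first | (exact ⟨by omega, rfl⟩) | omega
  refine ⟨fun i => (hσε i).1, ?_, fun i => (hσε i).2⟩
  intro i
  have his : (i : ℕ) < s := i.isLt
  have hx := congrFun h (((k + (i : ℕ) : ℕ) : ZMod (2 * n)))
  unfold buildC at hx
  rw [hcast _ (by omega), if_pos (show k + (i:ℕ) < n by omega), if_pos (show k + (i:ℕ) < n by omega)] at hx
  rw [buildW_ge (σ := σ) (τ := τ) (ε := ε) (by omega) (by omega)] at hx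
  rw [buildW_ge (σ := σ') (τ := τ') (ε := ε') (by omega) (by omega)] at hx
  have he : k + (i : ℕ) - k = (i : ℕ) := by omega
  simp only [he, Fin.eta] at hx
  have h1 := hτ i; have h2 := hτ' i
  split_ifs at hx <;> omega

end Build3

/-- A set `F ∈ 𝓟ʳ(Mₙ)` with `n < r ≤ 2n` is the initial interval `{c(0),…,c(r−1)}` of
exactly `(2n−r)!·(r−n)!·2^(r−n)` good cyclic orderings `c`. -/
theorem count_goodCyclic_famP (n r : ℕ) (hn : 1 ≤ n) (hnr : n < r) (hr2 : r ≤ 2 * n)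
    (F : Finset ℕ) (hF : F ∈ famP n r) :
    Nat.card {c : ZMod (2 * n) → ℕ // IsGoodCyclic n c ∧
        F = (Finset.range r).image fun j : ℕ => c (j : ZMod (2 * n))} =
      (2 * n - r).factorial * (r - n).factorial * 2 ^ (r - n) := by
  classical
  haveI : NeZero (2 * n) := ⟨by omega⟩
  obtain ⟨hFsub, hFcard, B, hBF, hBind, hBcard⟩ :
      F ⊆ Finset.Icc 1 (2 * n) ∧ F.card = r ∧ ∃ B ⊆ F, IsIndepMn n B ∧ B.card = n := by
    rcases hF with h | h
    · exfalso
      have h1 : F.card = r := h.1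
      have h2 := indep_card_le h.2
      omega
    · obtain ⟨h1, h2, B, hB1, hB2, hB3⟩ := h
      exact ⟨h1, h2, B, hB1, hB2, by rwa [indepNum_eq hn] at hB3⟩
  have hFmem : ∀ v ∈ F, 1 ≤ v ∧ v ≤ 2 * n := fun v hv => Finset.mem_Icc.mp (hFsub hv)
  have hBmem : ∀ v ∈ B, 1 ≤ v ∧ v ≤ 2 * n := fun v hv => Finset.mem_Icc.mp (hBind.1 hv)
  have hmeet : ∀ i, 1 ≤ i → i ≤ n → i ∈ F ∨ i + n ∈ F := by
    intro i h1 h2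
    have himg : B.image (psm n) = Finset.Icc 1 n := by
      apply Finset.eq_of_subset_of_card_le
      · intro x hx
        obtain ⟨b, hb, rfl⟩ := Finset.mem_image.mp hx
        have := hBmem b hb
        exact Finset.mem_Icc.mpr (psm_mem this.1 this.2)
      · rw [Finset.card_image_of_injOn (indep_psm_injOn hBind), hBcard]; simp
    have hmm : i ∈ B.image (psm n) := by rw [himg]; exact Finset.mem_Icc.mpr ⟨h1, h2⟩
    obtain ⟨b, hb, hbi⟩ := Finset.mem_image.mp hmm
    have hbb := hBmem b hb
    unfold psm at hbi
    split_ifs at hbi with hbn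
    · left; exact hbi ▸ hBF hb
    · right
      have hbe : b = i + n := by omega
      exact hbe ▸ hBF hb
  set D := (Finset.Icc 1 n).filter (fun i => i ∈ F ∧ i + n ∈ F) with hDdef
  set S := (Finset.Icc 1 n).filter (fun i => ¬(i ∈ F ∧ i + n ∈ F)) with hSdef
  have hDmem : ∀ i, i ∈ D ↔ 1 ≤ i ∧ i ≤ n ∧ i ∈ F ∧ i + n ∈ F := by
    intro i; rw [hDdef]; simp [Finset.mem_filter, Finset.mem_Icc, and_assoc]
  have hSmem : ∀ i, i ∈ S ↔ 1 ≤ i ∧ i ≤ n ∧ ¬(i ∈ F ∧ i + n ∈ F) := by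
    intro i; rw [hSdef]; simp [Finset.mem_filter, Finset.mem_Icc, and_assoc]
  have hDcard : D.card = r - n := by
    set L := F.filter (fun v => v ≤ n) with hLdef
    set U := F.filter (fun v => ¬ v ≤ n) with hUdef
    have hLU : L.card + U.card = r := by
      rw [hLdef, hUdef, Finset.card_filter_add_card_filter_not, hFcard]
    set U' := U.image (fun v => v - n) with hU'def
    have hUinj : Set.InjOn (fun v => v - n) U := by
      intro a ha b hb hab
      have ha' := Finset.mem_filter.mp (Finset.mem_coe.mp ha)
      have hb' := Finset.mem_filter.mp (Finset.mem_coe.mp hb)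
      have h1 := hFmem a ha'.1
      have h2 := hFmem b hb'.1
      have ha2 := ha'.2
      have hb2 := hb'.2
      simp only at hab
      omega
    have hU'card : U'.card = U.card := Finset.card_image_of_injOn hUinj
    have hunion : L ∪ U' = Finset.Icc 1 n := by
      ext i
      simp only [hLdef, hU'def, hUdef, Finset.mem_union, Finset.mem_image, Finset.mem_filter,
        Finset.mem_Icc]
      constructor
      · rintro (⟨hiF, hin⟩ | ⟨v, ⟨hvF, hvn⟩, rfl⟩)
        · exact ⟨(hFmem i hiF).1, hin⟩
        · have := hFmem v hvF; omega
      · rintro ⟨h1, h2⟩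
        rcases hmeet i h1 h2 with h | h
        · exact Or.inl ⟨h, h2⟩
        · exact Or.inr ⟨i + n, ⟨h, by omega⟩, by omega⟩
    have hinter : L ∩ U' = D := by
      ext i
      simp only [hLdef, hU'def, hUdef, Finset.mem_inter, Finset.mem_image, Finset.mem_filter]
      rw [hDmem]
      constructor
      · rintro ⟨⟨hiF, hin⟩, v, ⟨hvF, hvn⟩, rfl⟩
        have hvb := hFmem v hvF
        have hve : v = (v - n) + n := by omega
        exact ⟨by omega, hin, hiF, hve ▸ hvF⟩
      · rintro ⟨h1, h2, h3, h4⟩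
        exact ⟨⟨h3, h2⟩, i + n, ⟨h4, by omega⟩, by omega⟩
    have hcui := Finset.card_union_add_card_inter L U'
    rw [hunion, hinter, Nat.card_Icc] at hcui
    omega
  have hScard : S.card = 2 * n - r := by
    have hdisj : Disjoint D S := Finset.disjoint_filter_filter_not _ _ _
    have huni : D ∪ S = Finset.Icc 1 n := Finset.filter_union_filter_not_eq _ _
    have hcu := Finset.card_union_of_disjoint hdisj
    rw [huni, Nat.card_Icc] at hcu
    omega
  have hks : (r - n) + (2 * n - r) = n := by omega
  have hDprop : ∀ x : {x // x ∈ D},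
      1 ≤ (x : ℕ) ∧ (x : ℕ) ≤ n ∧ (x : ℕ) ∈ F ∧ (x : ℕ) + n ∈ F :=
    fun x => (hDmem _).mp x.2
  have hSprop : ∀ x : {x // x ∈ S}, 1 ≤ (x : ℕ) ∧ (x : ℕ) ≤ n ∧
      ((x : ℕ) ∈ F ∨ (x : ℕ) + n ∈ F) ∧ ¬((x : ℕ) ∈ F ∧ (x : ℕ) + n ∈ F) := by
    intro x
    have h := (hSmem _).mp x.2
    exact ⟨h.1, h.2.1, hmeet _ h.1 h.2.1, h.2.2⟩
  let Ψ : ((Fin (r - n) ≃ {x // x ∈ D}) × (Fin (2 * n - r) ≃ {x // x ∈ S}) ×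
      (Fin (r - n) → Bool)) →
      {c : ZMod (2 * n) → ℕ // IsGoodCyclic n c ∧
        F = (Finset.range r).image fun j : ℕ => c (j : ZMod (2 * n))} :=
    fun t => ⟨buildC n (r - n) (2 * n - r) F (fun i => (t.1 i : ℕ)) (fun i => (t.2.1 i : ℕ)) t.2.2,
      buildC_good (fun i => hDprop (t.1 i)) (fun i => hSprop (t.2.1 i)) hn hks
        (fun a b hab => t.1.injective (Subtype.ext hab))
        (fun a b hab => t.2.1.injective (Subtype.ext hab)),
      by
        have him := buildC_image (ε := t.2.2) (fun i => hDprop (t.1 i))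
          (fun i => hSprop (t.2.1 i)) hn hks hFmem ?_
        · rwa [show n + (r - n) = r from by omega] at him
        · intro v hv
          have hb := hFmem v hv
          have hp := psm_mem hb.1 hb.2
          by_cases hD : psm n v ∈ D
          · exact Or.inl ⟨t.1.symm ⟨_, hD⟩, by simp⟩
          · have hS : psm n v ∈ S := by
              rw [hSmem]
              rw [hDmem] at hD
              exact ⟨hp.1, hp.2, fun hc => hD ⟨hp.1, hp.2, hc.1, hc.2⟩⟩
            exact Or.inr ⟨t.2.1.symm ⟨_, hS⟩, by simp⟩⟩
  have hbij : Function.Bijective Ψ := by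
    constructor
    · rintro ⟨σ1, τ1, ε1⟩ ⟨σ2, τ2, ε2⟩ hψ
      have hcc : buildC n (r - n) (2 * n - r) F (fun i => (σ1 i : ℕ)) (fun i => (τ1 i : ℕ)) ε1
          = buildC n (r - n) (2 * n - r) F (fun i => (σ2 i : ℕ)) (fun i => (τ2 i : ℕ)) ε2 :=
        congrArg Subtype.val hψ
      have h3 := build_inj hn hks
        (fun i => ⟨(hDprop (σ1 i)).1, (hDprop (σ1 i)).2.1⟩)
        (fun i => ⟨(hDprop (σ2 i)).1, (hDprop (σ2 i)).2.1⟩)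
        (fun i => ⟨(hSprop (τ1 i)).1, (hSprop (τ1 i)).2.1⟩)
        (fun i => ⟨(hSprop (τ2 i)).1, (hSprop (τ2 i)).2.1⟩) hcc
      simp only [Prod.mk.injEq]
      refine ⟨Equiv.ext fun i => Subtype.ext (h3.1 i),
        Equiv.ext fun i => Subtype.ext (h3.2.1 i), funext h3.2.2⟩
    · rintro ⟨c, hgood, hFeq⟩
      obtain ⟨hcinj, hcmem, hcshift⟩ := hgood
      have hcast : ∀ j : ℕ, j < 2 * n → ((j : ℕ) : ZMod (2 * n)).val = j := fun j hj => by
        rw [ZMod.val_natCast]; exact Nat.mod_eq_of_lt hj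
      have hcF : ∀ z : ZMod (2 * n), c z ∈ F ↔ z.val < n + (r - n) := by
        intro z
        constructor
        · intro hz
          rw [hFeq] at hz
          obtain ⟨j, hj, hcj⟩ := Finset.mem_image.mp hz
          rw [Finset.mem_range] at hj
          have hjz := hcinj hcj
          rw [← hjz, hcast j (by omega)]
          omega
        · intro hz
          rw [hFeq]
          refine Finset.mem_image.mpr ⟨z.val, Finset.mem_range.mpr (by omega), ?_⟩
          rw [ZMod.natCast_zmod_val]
      have hcb : ∀ z, 1 ≤ c z ∧ c z ≤ 2 * n := fun z => Finset.mem_Icc.mp (hcmem z)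
      have hσ0D : ∀ i : Fin (r - n), psm n (c ((i : ℕ) : ZMod (2 * n))) ∈ D := by
        intro i
        have hik : (i : ℕ) < r - n := i.isLt
        have hval : (((i : ℕ)) : ZMod (2 * n)).val = (i : ℕ) := hcast _ (by omega)
        have hb := hcb ((i : ℕ) : ZMod (2 * n))
        have hvF : c ((i : ℕ) : ZMod (2 * n)) ∈ F := (hcF _).mpr (by rw [hval]; omega)
        have hpF : partnerMn n (c ((i : ℕ) : ZMod (2 * n))) ∈ F := by
          rw [← hcshift]
          refine (hcF _).mpr ?_
          rw [add_n_val hn, hval, if_pos (by omega)]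
          omega
        rw [hDmem]
        have hp := psm_mem hb.1 hb.2
        rcases psm_eq_cases hb.1 hb.2 with ⟨_, h2, h3⟩ | ⟨_, h2, h3⟩
        · exact ⟨hp.1, hp.2, by rw [h2]; exact hvF, by rw [← h3]; exact hpF⟩
        · exact ⟨hp.1, hp.2, by rw [← h3]; exact hpF, by rw [← h2]; exact hvF⟩
      have hτ0S : ∀ i : Fin (2 * n - r),
          psm n (c (((r - n) + (i : ℕ) : ℕ) : ZMod (2 * n))) ∈ S := by
        intro i
        have his : (i : ℕ) < 2 * n - r := i.isLt
        have hval : ((((r - n) + (i : ℕ) : ℕ)) : ZMod (2 * n)).val = (r - n) + (i : ℕ) :=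
          hcast _ (by omega)
        have hb := hcb (((r - n) + (i : ℕ) : ℕ) : ZMod (2 * n))
        have hvF : c (((r - n) + (i : ℕ) : ℕ) : ZMod (2 * n)) ∈ F :=
          (hcF _).mpr (by rw [hval]; omega)
        have hpF : partnerMn n (c (((r - n) + (i : ℕ) : ℕ) : ZMod (2 * n))) ∉ F := by
          rw [← hcshift]
          intro hmem
          have := (hcF _).mp hmem
          rw [add_n_val hn, hval, if_pos (by omega)] at this
          omega
        rw [hSmem]
        have hp := psm_mem hb.1 hb.2
        refine ⟨hp.1, hp.2, ?_⟩
        rcases psm_eq_cases hb.1 hb.2 with ⟨_, h2, h3⟩ | ⟨_, h2, h3⟩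
        · intro hc
          exact hpF (by rw [h3]; exact hc.2)
        · intro hc
          exact hpF (by rw [h3]; exact hc.1)
      have hinjD : Function.Injective (fun i : Fin (r - n) =>
          (⟨psm n (c ((i : ℕ) : ZMod (2 * n))), hσ0D i⟩ : {x // x ∈ D})) := by
        intro a b hab
        have h1 : psm n (c ((a : ℕ) : ZMod (2 * n))) = psm n (c ((b : ℕ) : ZMod (2 * n))) :=
          congrArg Subtype.val hab
        have hba := hcb ((a : ℕ) : ZMod (2 * n))
        have hbb := hcb ((b : ℕ) : ZMod (2 * n))
        have hak : (a : ℕ) < r - n := a.isLt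
        have hbk : (b : ℕ) < r - n := b.isLt
        rcases psm_inj hba.1 hba.2 hbb.1 hbb.2 h1 with h | h
        · have := congrArg ZMod.val (hcinj h)
          rw [hcast _ (by omega), hcast _ (by omega)] at this
          exact Fin.ext this
        · exfalso
          rw [← hcshift] at h
          have hv := congrArg ZMod.val (hcinj h)
          rw [hcast _ (by omega), add_n_val hn, hcast _ (by omega),
            if_pos (show (b : ℕ) < n by omega)] at hv
          omega
      have hinjS : Function.Injective (fun i : Fin (2 * n - r) =>
          (⟨psm n (c (((r - n) + (i : ℕ) : ℕ) : ZMod (2 * n))), hτ0S i⟩ : {x // x ∈ S})) := by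
        intro a b hab
        have h1 : psm n (c (((r - n) + (a : ℕ) : ℕ) : ZMod (2 * n)))
            = psm n (c (((r - n) + (b : ℕ) : ℕ) : ZMod (2 * n))) :=
          congrArg Subtype.val hab
        have hba := hcb (((r - n) + (a : ℕ) : ℕ) : ZMod (2 * n))
        have hbb := hcb (((r - n) + (b : ℕ) : ℕ) : ZMod (2 * n))
        have has : (a : ℕ) < 2 * n - r := a.isLt
        have hbs : (b : ℕ) < 2 * n - r := b.isLt
        rcases psm_inj hba.1 hba.2 hbb.1 hbb.2 h1 with h | h
        · have := congrArg ZMod.val (hcinj h)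
          rw [hcast _ (by omega), hcast _ (by omega)] at this
          exact Fin.ext (by omega)
        · exfalso
          rw [← hcshift] at h
          have hv := congrArg ZMod.val (hcinj h)
          rw [hcast _ (by omega), add_n_val hn, hcast _ (by omega),
            if_pos (show (r - n) + (b : ℕ) < n by omega)] at hv
          omega
      refine ⟨⟨Equiv.ofBijective _ ((Fintype.bijective_iff_injective_and_card _).mpr
          ⟨hinjD, by simp [hDcard]⟩),
        Equiv.ofBijective _ ((Fintype.bijective_iff_injective_and_card _).mpr
          ⟨hinjS, by simp [hScard]⟩),
        fun i => decide (c ((i : ℕ) : ZMod (2 * n)) ≤ n)⟩, ?_⟩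
      apply Subtype.ext
      exact buildC_eq hn hks hcmem hcshift hcF (fun i => rfl) (fun i => rfl) (fun i => rfl)
  rw [← Nat.card_congr (Equiv.ofBijective Ψ hbij)]
  rw [Nat.card_prod, Nat.card_prod]
  rw [Nat.card_eq_fintype_card, Nat.card_eq_fintype_card, Nat.card_eq_fintype_card]
  rw [Fintype.card_equiv (Fintype.equivOfCardEq (by simp [hDcard]))]
  rw [Fintype.card_equiv (Fintype.equivOfCardEq (by simp [hScard]))]
  simp only [Fintype.card_fin, Fintype.card_fun, Fintype.card_bool]
  ring
end

section
/- Let n ≤ r < 2n and let A ∈ 𝓟^r_{2n}(M_n), i.e., A is an r-subset of V(M_n) containing the vertex 2n which is independent or contains an independent set of size n. Then there exists a good cyclic ordering c of V(M_n) with c(0) = 2n such that A is a c-interval of length r, i.e., A = {c(j), c(j+1), …, c(j+r−1)} for some index j ∈ ℤ/2nℤ. -/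
/-! A maximum independent set `B ⊆ A` has `n` vertices, so it meets every pair of partners, and
`A` is `B` together with the partners of `D = {b ∈ B | partner b ∈ A}`; thus `r = n + |D|`.
Listing `B` with `D` first, followed by the partners in the same order, gives a good cyclic
ordering in which `A` is the interval of length `r` starting at `0`; a rotation then brings `2n`
to index `0`. -/

open Finset

lemma Finset.exists_list_take_card_eq {α : Type*} [DecidableEq α] {B D : Finset α} (hDB : D ⊆ B) :
    ∃ l : List α, l.Nodup ∧ l.toFinset = B ∧ (l.take D.card).toFinset = D := by
  refine ⟨D.toList ++ (B \ D).toList, ?_, ?_, ?_⟩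
  · refine (nodup_toList D).append (nodup_toList _) fun v hv hv' => ?_
    exact (mem_sdiff.1 (mem_toList.1 hv')).2 (mem_toList.1 hv)
  · rw [List.toFinset_append, toList_toFinset, toList_toFinset, union_sdiff_of_subset hDB]
  · rw [List.take_left' (length_toList D), toList_toFinset]

section Matching

variable {n v : ℕ}

lemma partnerMn_mem_Icc (hv : v ∈ Icc 1 (2 * n)) : partnerMn n v ∈ Icc 1 (2 * n) := by
  simp only [mem_Icc, partnerMn] at *
  split_ifs <;> omega

lemma partnerMn_partnerMn (hv : v ∈ Icc 1 (2 * n)) : partnerMn n (partnerMn n v) = v := by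
  simp only [mem_Icc, partnerMn] at *
  split_ifs <;> omega

lemma partnerMn_injOn : Set.InjOn (partnerMn n) (Icc 1 (2 * n)) := fun v hv w hw h => by
  rw [← partnerMn_partnerMn hv, h, partnerMn_partnerMn hw]

lemma isIndepMn_Icc : IsIndepMn n (Icc 1 n) :=
  ⟨Icc_subset_Icc_right (by omega), fun i _ h => by simp only [mem_Icc] at h; omega⟩

namespace IsIndepMn

variable {B D : Finset ℕ}

lemma partnerMn_notMem (hB : IsIndepMn n B) (hv : v ∈ B) : partnerMn n v ∉ B := by
  intro hp
  have hv' := mem_Icc.1 (hB.1 hv)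
  unfold partnerMn at hp
  split_ifs at hp with h
  · exact hB.2 v (mem_Icc.2 ⟨hv'.1, h⟩) ⟨hv, hp⟩
  · exact hB.2 (v - n) (mem_Icc.2 ⟨by omega, by omega⟩) ⟨hp, by rwa [Nat.sub_add_cancel (by omega)]⟩

lemma card_union_image_partnerMn (hB : IsIndepMn n B) (hDB : D ⊆ B) :
    (B ∪ D.image (partnerMn n)).card = B.card + D.card := by
  have hdisj : Disjoint B (D.image (partnerMn n)) := by
    simp only [disjoint_left, mem_image, not_exists, not_and]
    rintro v hv w hw rfl
    exact hB.partnerMn_notMem (hDB hw) hv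
  rw [card_union_of_disjoint hdisj,
    card_image_of_injOn (partnerMn_injOn.mono (by exact_mod_cast hDB.trans hB.1))]

lemma union_image_partnerMn_subset (hB : IsIndepMn n B) :
    B ∪ B.image (partnerMn n) ⊆ Icc 1 (2 * n) :=
  union_subset hB.1 fun _ hw => by
    obtain ⟨v, hv, rfl⟩ := mem_image.1 hw
    exact partnerMn_mem_Icc (hB.1 hv)

lemma card_le (hB : IsIndepMn n B) : B.card ≤ n := by
  have := card_le_card hB.union_image_partnerMn_subset
  rw [hB.card_union_image_partnerMn subset_rfl, Nat.card_Icc] at this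
  omega

lemma mem_or_partnerMn_mem (hB : IsIndepMn n B) (hcard : B.card = n) (hv : v ∈ Icc 1 (2 * n)) :
    v ∈ B ∨ partnerMn n v ∈ B := by
  have hcover : B ∪ B.image (partnerMn n) = Icc 1 (2 * n) :=
    eq_of_subset_of_card_le hB.union_image_partnerMn_subset (by
      rw [hB.card_union_image_partnerMn subset_rfl, hcard, Nat.card_Icc]; omega)
  rw [← hcover, mem_union, mem_image] at hv
  rcases hv with hv | ⟨w, hw, rfl⟩
  · exact Or.inl hv
  · exact Or.inr (by rwa [partnerMn_partnerMn (hB.1 hw)])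

end IsIndepMn

lemma indepNumMn_eq : indepNumMn n = n := by
  have hn : n ∈ {k | ∃ B, IsIndepMn n B ∧ B.card = k} := ⟨_, isIndepMn_Icc, by simp⟩
  have hle : ∀ k ∈ {k | ∃ B, IsIndepMn n B ∧ B.card = k}, k ≤ n := by
    rintro _ ⟨B, hB, rfl⟩
    exact hB.card_le
  exact le_antisymm (csSup_le ⟨n, hn⟩ hle) (le_csSup ⟨n, hle⟩ hn)

lemma exists_isIndepMn_subset_of_mem_famP {r : ℕ} {A : Finset ℕ} (hA : A ∈ famP n r)
    (hnr : n ≤ r) :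
    A ⊆ Icc 1 (2 * n) ∧ A.card = r ∧ ∃ B ⊆ A, IsIndepMn n B ∧ B.card = n := by
  rcases hA with ⟨hcard, hA⟩ | ⟨hsub, hcard, B, hBA, hB, hBcard⟩
  · exact ⟨hA.1, hcard, A, subset_rfl, hA, le_antisymm hA.card_le (hcard ▸ hnr)⟩
  · exact ⟨hsub, hcard, B, hBA, hB, hBcard.trans indepNumMn_eq⟩

lemma eq_union_image_partnerMn {A B : Finset ℕ} (hA : A ⊆ Icc 1 (2 * n)) (hBA : B ⊆ A)
    (hB : IsIndepMn n B) (hcard : B.card = n) :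
    A = B ∪ (B.filter (partnerMn n · ∈ A)).image (partnerMn n) := by
  ext v
  simp only [mem_union, mem_image, mem_filter]
  constructor
  · intro hv
    have hpp := partnerMn_partnerMn (hA hv)
    refine (hB.mem_or_partnerMn_mem hcard (hA hv)).imp id fun hpB => ⟨_, ⟨hpB, ?_⟩, hpp⟩
    rwa [hpp]
  · rintro (hv | ⟨w, ⟨-, hw⟩, rfl⟩)
    exacts [hBA hv, hw]

end Matching

section Cyclic

variable {n : ℕ}

lemma gInterval_comp_add (c : ZMod (2 * n) → ℕ) (r : ℕ) (x a : ZMod (2 * n)) :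
    gInterval n (fun i => c (i + a)) r x = gInterval n c r (x + a) := by
  simp only [gInterval, add_right_comm x]

lemma IsGoodCyclic.comp_add {c : ZMod (2 * n) → ℕ} (hc : IsGoodCyclic n c) (a : ZMod (2 * n)) :
    IsGoodCyclic n (fun i => c (i + a)) :=
  ⟨hc.1.comp (add_left_injective a), fun _ => hc.2.1 _, fun i => by
    simp only [add_right_comm i]
    exact hc.2.2 _⟩

lemma IsGoodCyclic.exists_apply_eq [NeZero n] {c : ZMod (2 * n) → ℕ} (hc : IsGoodCyclic n c)
    {v : ℕ} (hv : v ∈ Icc 1 (2 * n)) : ∃ i, c i = v := by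
  have hrange : univ.image c = Icc 1 (2 * n) :=
    eq_of_subset_of_card_le (image_subset_iff.2 fun i _ => hc.2.1 i) (by
      rw [card_image_of_injective _ hc.1, card_univ, ZMod.card, Nat.card_Icc]; omega)
  rw [← hrange] at hv
  simpa using hv

lemma gInterval_getD_zero [NeZero n] {L : List ℕ} (hL : L.length = 2 * n) {r : ℕ}
    (hr : r ≤ 2 * n) :
    gInterval n (fun i => L.getD i.val 0) r 0 = (L.take r).toFinset := by
  ext v
  simp only [gInterval, zero_add, ZMod.val_natCast, mem_image, mem_range, List.mem_toFinset,
    List.mem_take_iff_getElem]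
  constructor
  · rintro ⟨j, hj, rfl⟩
    refine ⟨j, by omega, ?_⟩
    rw [Nat.mod_eq_of_lt (by omega), List.getD_eq_getElem]
  · rintro ⟨j, hj, rfl⟩
    refine ⟨j, by omega, ?_⟩
    rw [Nat.mod_eq_of_lt (by omega), List.getD_eq_getElem]

def cyclicOfList (n : ℕ) (l : List ℕ) : ZMod (2 * n) → ℕ :=
  fun i => (l ++ l.map (partnerMn n)).getD i.val 0

lemma isGoodCyclic_cyclicOfList [NeZero n] {l : List ℕ} (hnd : l.Nodup) (hlen : l.length = n)
    (hl : IsIndepMn n l.toFinset) : IsGoodCyclic n (cyclicOfList n l) := by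
  set L := l ++ l.map (partnerMn n) with hL
  have hlIcc : ∀ v ∈ l, v ∈ Icc 1 (2 * n) := fun v hv => hl.1 (List.mem_toFinset.2 hv)
  have hLlen : L.length = 2 * n := by simp [L, hlen, two_mul]
  have hLIcc : ∀ v ∈ L, v ∈ Icc 1 (2 * n) := by
    simp only [L, List.mem_append, List.mem_map]
    rintro v (hv | ⟨w, hw, rfl⟩)
    exacts [hlIcc v hv, partnerMn_mem_Icc (hlIcc w hw)]
  have hLnd : L.Nodup := by
    refine hnd.append (hnd.map_on fun v hv w hw h => partnerMn_injOn (hlIcc v hv) (hlIcc w hw) h) ?_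
    rintro _ hv hw
    obtain ⟨w, hw', rfl⟩ := List.mem_map.1 hw
    exact hl.partnerMn_notMem (List.mem_toFinset.2 hw') (List.mem_toFinset.2 hv)
  have hget : ∀ i : ZMod (2 * n), L.getD i.val 0 = L[i.val]'(by rw [hLlen]; exact ZMod.val_lt i) :=
    fun i => List.getD_eq_getElem _ _ _
  have hshift : ∀ j < n, L.getD (j + n) 0 = partnerMn n (L.getD j 0) := fun j hj => by
    rw [List.getD_append_right _ _ _ _ (by omega), List.getD_append _ _ _ _ (by omega), hlen,
      Nat.add_sub_cancel, List.getD_eq_getElem _ _ (by simpa [hlen]), List.getElem_map,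
      List.getD_eq_getElem]
  refine ⟨fun i j h => ?_, fun i => ?_, fun i => ?_⟩
  · simp only [cyclicOfList, ← hL, hget] at h
    exact ZMod.val_injective _ (hLnd.getElem_inj_iff.1 h)
  · simp only [cyclicOfList, ← hL, hget]
    exact hLIcc _ (List.getElem_mem _)
  · have hi := ZMod.val_lt i
    simp only [cyclicOfList, ← hL]
    rw [ZMod.val_add, ZMod.val_natCast, Nat.mod_eq_of_lt (show n < 2 * n by omega)]
    rcases lt_or_ge i.val n with h | h
    · rw [Nat.mod_eq_of_lt (by omega), hshift _ h]
    · obtain ⟨j, hj⟩ : ∃ j, i.val = j + n := ⟨i.val - n, by omega⟩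
      rw [hj, show j + n + n = j + 2 * n by omega, Nat.add_mod_right, Nat.mod_eq_of_lt (by omega),
        hshift _ (by omega), partnerMn_partnerMn]
      rw [List.getD_eq_getElem _ _ (by omega)]
      exact hLIcc _ (List.getElem_mem _)

lemma gInterval_cyclicOfList [NeZero n] {l : List ℕ} (hlen : l.length = n) {s : ℕ} (hs : s ≤ n) :
    gInterval n (cyclicOfList n l) (n + s) 0 =
      l.toFinset ∪ (l.take s).toFinset.image (partnerMn n) := by
  unfold cyclicOfList
  rw [gInterval_getD_zero (by simp [hlen, two_mul]) (by omega),
    List.take_append, List.take_of_length_le (by omega), hlen, Nat.add_sub_cancel_left,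
    ← List.map_take, List.toFinset_append]
  ext
  simp only [mem_union, mem_image, List.mem_toFinset, List.mem_map]

end Cyclic

lemma exists_isGoodCyclic_gInterval_eq {n : ℕ} [NeZero n] {B D : Finset ℕ} (hB : IsIndepMn n B)
    (hcard : B.card = n) (hDB : D ⊆ B) :
    ∃ c, IsGoodCyclic n c ∧ gInterval n c (n + D.card) 0 = B ∪ D.image (partnerMn n) := by
  obtain ⟨l, hnd, hlB, hlD⟩ := exists_list_take_card_eq hDB
  have hlen : l.length = n := by rw [← List.toFinset_card_of_nodup hnd, hlB, hcard]
  refine ⟨cyclicOfList n l, isGoodCyclic_cyclicOfList hnd hlen (hlB ▸ hB), ?_⟩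
  rw [gInterval_cyclicOfList hlen (hcard ▸ card_le_card hDB), hlB, hlD]

theorem star_mem_isInterval_general (n r : ℕ) (hn : 1 ≤ n) (hnr : n ≤ r)
    (A : Finset ℕ) (hA : A ∈ famP n r) :
    ∃ c : ZMod (2 * n) → ℕ, IsGoodCyclic n c ∧ c 0 = 2 * n ∧
      ∃ j : ZMod (2 * n), A = gInterval n c r j := by
  have : NeZero n := ⟨by omega⟩
  obtain ⟨hAsub, hAcard, B, hBA, hB, hBcard⟩ := exists_isIndepMn_subset_of_mem_famP hA hnr
  set D := B.filter (partnerMn n · ∈ A)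
  have hDB : D ⊆ B := filter_subset _ _
  have hAeq : A = B ∪ D.image (partnerMn n) := eq_union_image_partnerMn hAsub hBA hB hBcard
  have hr : r = n + D.card := by
    rw [← hAcard, hAeq, hB.card_union_image_partnerMn hDB, hBcard]
  obtain ⟨c, hc, hcA⟩ := exists_isGoodCyclic_gInterval_eq hB hBcard hDB
  obtain ⟨m, hm⟩ := hc.exists_apply_eq (v := 2 * n) (by simp only [mem_Icc]; omega)
  refine ⟨fun i => c (i + m), hc.comp_add m, by simpa using hm, -m, ?_⟩
  rw [gInterval_comp_add, neg_add_cancel, hr, hcA, ← hAeq]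

/-- Every member of the star `𝓟ʳ_{2n}(Mₙ)` (`n ≤ r < 2n`) is an interval of length `r`
in some good cyclic ordering `c` with `c(0) = 2n`. -/
theorem star_mem_isInterval (n r : ℕ) (hn : 1 ≤ n) (hnr : n ≤ r) (hr2 : r < 2 * n)
    (A : Finset ℕ) (hA : A ∈ famP n r) (h2n : 2 * n ∈ A) :
    ∃ c : ZMod (2 * n) → ℕ, IsGoodCyclic n c ∧ c 0 = 2 * n ∧
      ∃ j : ZMod (2 * n), A = gInterval n c r j :=
  star_mem_isInterval_general n r hn hnr A hA
end
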